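/- For each n ≥ 1, define the polynomial Ẽ_n(x) by Ẽ_n(k) = h_n(1,2,…,k+1) for all non-negative integers k. Then the coefficient of x in Ẽ_n(x) equals n + Σ_{j=1}^{n} B_j / j, with Bernoulli convention B_1 = 1/2. -/

import Mathlib

/-!
The generating function `∑ₙ hₙ(1,…,m) Xⁿ = ∏_{i ≤ m} (1 - iX)⁻¹` has logarithmic derivative
`∑ᵣ p_{r+1}(1,…,m) Xʳ`, which is Newton's identity
`(n+1) h_{n+1} = ∑_{r ≤ n} p_{r+1} h_{n-r}`. Replacing each power sum `k ↦ p_{r+1}(1,…,k+1)` by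
its Faulhaber (Bernoulli) polynomial, the same recursion defines polynomials `Ẽₙ` interpolating
`k ↦ hₙ(1,…,k+1)`. All of them take the value `1` at `0`, and the Faulhaber polynomial has slope
`B_{r+1}(2) = r + 1 + B_{r+1}` at `0` (a Bernoulli polynomial value), so differentiating the recursion at `0` gives
`(n+1) Ẽ'_{n+1}(0) = ∑_{r ≤ n} (Ẽ'_{n-r}(0) + r + 1 + B_{r+1})`,
whose solution is `Ẽ'ₙ(0) = ∑_{j ≤ n} (1 + B_j / j)`.
-/

open scoped Classical

/-- The Stirling number of the second kind `S(m, k)`: the number of partitions of an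
`m`-element set into `k` non-empty blocks. -/
noncomputable def stirling2 (m k : ℕ) : ℕ :=
  Nat.card {P : Finpartition (Finset.univ : Finset (Fin m)) // P.parts.card = k}

/-- The complete homogeneous symmetric polynomial of degree `n` evaluated at
`(1, 2, …, k)`, i.e. `∑_{1 ≤ z₁ ≤ ⋯ ≤ z_n ≤ k} z₁ ⋯ z_n`. -/
noncomputable def hNat (n k : ℕ) : ℕ :=
  ∑ f ∈ Finset.univ.filter (fun f : Fin n → Fin k => Monotone f), ∏ i, ((f i : ℕ) + 1)

open Finset

lemma Fin.monotone_snoc {α : Type*} [Preorder α] {n : ℕ} {g : Fin n → α} (hg : Monotone g)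
    {a : α} (ha : ∀ i, g i ≤ a) : Monotone (Fin.snoc g a : Fin (n + 1) → α) := by
  intro i j hij
  induction j using Fin.lastCases with
  | last => induction i using Fin.lastCases <;> simp [ha]
  | cast j =>
    obtain ⟨i, rfl⟩ :=
      Fin.exists_castSucc_eq.2 (Fin.ne_last_of_lt (hij.trans_lt (Fin.castSucc_lt_last j)))
    simpa using hg (Fin.castSucc_le_castSucc_iff.1 hij)

lemma sum_range_mul_add_sum_Icc {R : Type*} [CommSemiring R] (c : ℕ → R) (n : ℕ) :
    ∑ r ∈ range (n + 1), (((r : R) + 1) * c (r + 1) + ∑ j ∈ Icc 1 r, c j) =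
      ((n : R) + 1) * ∑ j ∈ Icc 1 (n + 1), c j := by
  induction n with
  | zero => simp
  | succ n ih =>
    rw [sum_range_succ, ih, sum_Icc_succ_top (Nat.le_add_left 1 (n + 1)),
      sum_Icc_succ_top (Nat.le_add_left 1 n)]
    push_cast
    ring

lemma Polynomial.coeff_one_eq_derivative_eval_zero {R : Type*} [Semiring R] (p : Polynomial R) :
    p.coeff 1 = (Polynomial.derivative p).eval 0 := by
  simp [← Polynomial.coeff_zero_eq_eval_zero, Polynomial.coeff_derivative]

lemma hNat_zero_left (k : ℕ) : hNat 0 k = 1 := by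
  simp [hNat, Subsingleton.elim _ (Fin.elim0 : Fin 0 → Fin k), Monotone]

lemma hNat_succ_zero (n : ℕ) : hNat (n + 1) 0 = 0 := by
  simp [hNat]

lemma hNat_one_right (n : ℕ) : hNat n 1 = 1 := by
  simp [hNat, Subsingleton.elim _ (fun _ => 0 : Fin n → Fin 1), Monotone]

lemma sum_monotone_last_ne_last (n m : ℕ) :
    ∑ f ∈ {f : Fin (n + 1) → Fin (m + 1) | Monotone f ∧ f (Fin.last n) ≠ Fin.last m},
      ∏ i, ((f i : ℕ) + 1) = hNat (n + 1) m := by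
  refine sum_bij' (fun f hf j => (f j).castPred ?_) (fun g _ => Fin.castSucc ∘ g) ?_ ?_ ?_ ?_ ?_
  · simp only [mem_filter, mem_univ, true_and] at hf
    exact Fin.ne_last_of_lt ((hf.1 (Fin.le_last j)).trans_lt (Fin.lt_last_iff_ne_last.2 hf.2))
  · intro f hf
    simp only [mem_filter, mem_univ, true_and] at hf ⊢
    exact fun a b hab => Fin.castPred_le_castPred_iff.2 (hf.1 hab)
  · intro g hg
    simp only [mem_filter, mem_univ, true_and] at hg ⊢
    exact ⟨Fin.strictMono_castSucc.monotone.comp hg, (Fin.castSucc_lt_last _).ne⟩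
  all_goals intros; simp [funext_iff]

lemma sum_monotone_last_eq_last (n m : ℕ) :
    ∑ f ∈ {f : Fin (n + 1) → Fin (m + 1) | Monotone f ∧ f (Fin.last n) = Fin.last m},
      ∏ i, ((f i : ℕ) + 1) = (m + 1) * hNat n (m + 1) := by
  rw [hNat, mul_sum]
  refine sum_bij' (fun f _ => Fin.init f) (fun g _ => Fin.snoc g (Fin.last m)) ?_ ?_ ?_ ?_ ?_
  all_goals
    intro f hf
    simp only [mem_filter, mem_univ, true_and] at hf ⊢
  · exact hf.1.comp Fin.strictMono_castSucc.monotone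
  · exact ⟨Fin.monotone_snoc hf fun _ => Fin.le_last _, Fin.snoc_last _ _⟩
  · simp [← hf.2]
  · simp
  · simp [Fin.prod_univ_castSucc, hf.2, Fin.init, mul_comm]

lemma hNat_succ_succ (n m : ℕ) :
    hNat (n + 1) (m + 1) = hNat (n + 1) m + (m + 1) * hNat n (m + 1) := by
  rw [hNat, ← sum_filter_not_add_sum_filter _ (fun f => f (Fin.last n) = Fin.last m),
    filter_filter, filter_filter]
  exact congrArg₂ (· + ·) (sum_monotone_last_ne_last n m) (sum_monotone_last_eq_last n m)

section PowerSeries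

open PowerSeries

noncomputable def hNatSeries (m : ℕ) : ℚ⟦X⟧ := mk fun n => (hNat n m : ℚ)

noncomputable def powerSumSeries (m : ℕ) : ℚ⟦X⟧ :=
  mk fun r => ∑ i ∈ range (m + 1), (i : ℚ) ^ (r + 1)

lemma hNatSeries_zero : hNatSeries 0 = 1 := by
  ext (_ | n) <;> simp [hNatSeries, hNat_zero_left, hNat_succ_zero, coeff_one]

lemma hNatSeries_succ_mul_one_sub (m : ℕ) :
    hNatSeries (m + 1) * (1 - C ((m : ℚ) + 1) * X) = hNatSeries m := by
  ext (_ | n)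
  · simp [hNatSeries, hNat_zero_left]
  · rw [mul_sub, mul_one, map_sub, mul_left_comm, ← mul_assoc, coeff_succ_mul_X, coeff_C_mul]
    simp only [hNatSeries, coeff_mk, hNat_succ_succ]
    push_cast
    ring

lemma mk_pow_succ_mul_one_sub {R : Type*} [CommRing R] (x : R) :
    (mk fun r => x ^ (r + 1)) * (1 - C x * X) = C x := by
  ext (_ | n)
  · simp
  · rw [mul_sub, mul_one, map_sub, mul_left_comm, ← mul_assoc, coeff_succ_mul_X, coeff_C_mul]
    simp [pow_succ]
    ring

lemma derivative_hNatSeries (m : ℕ) :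
    d⁄dX ℚ (hNatSeries m) = powerSumSeries m * hNatSeries m := by
  induction m with
  | zero =>
    rw [hNatSeries_zero, derivative_one, mul_one]
    ext r
    simp [powerSumSeries]
  | succ m ih =>
    have hunit : (1 - C ((m : ℚ) + 1) * X : ℚ⟦X⟧) ≠ 0 := fun h => by
      simpa using congrArg constantCoeff h
    have hsum : powerSumSeries (m + 1) =
        powerSumSeries m + mk fun r => ((m : ℚ) + 1) ^ (r + 1) := by
      ext r
      simp [powerSumSeries, sum_range_succ]
    have hD := congrArg (d⁄dX ℚ) (hNatSeries_succ_mul_one_sub m)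
    rw [Derivation.leibniz, ih, ← hNatSeries_succ_mul_one_sub m] at hD
    simp only [map_sub, derivative_one, Derivation.leibniz, derivative_C, derivative_X,
      smul_eq_mul] at hD
    apply mul_right_cancel₀ hunit
    rw [hsum]
    linear_combination hD - hNatSeries (m + 1) * mk_pow_succ_mul_one_sub ((m : ℚ) + 1)

lemma hNat_newton (n m : ℕ) :
    ((n : ℚ) + 1) * hNat (n + 1) m =
      ∑ r ∈ range (n + 1), (∑ i ∈ range (m + 1), (i : ℚ) ^ (r + 1)) * hNat (n - r) m := by
  have h := congrArg (coeff n) (derivative_hNatSeries m)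
  rw [coeff_derivative, coeff_mul, Nat.sum_antidiagonal_eq_sum_range_succ_mk, mul_comm] at h
  simpa only [hNatSeries, powerSumSeries, coeff_mk] using h

end PowerSeries

section Polynomial

open Polynomial

noncomputable def powerSumPoly (r : ℕ) : ℚ[X] :=
  C ((r : ℚ) + 2)⁻¹ * ((Polynomial.bernoulli (r + 2)).comp (X + 2) - C (_root_.bernoulli (r + 2)))

lemma powerSumPoly_eval (r k : ℕ) :
    (powerSumPoly r).eval (k : ℚ) = ∑ i ∈ range (k + 2), (i : ℚ) ^ (r + 1) := by
  have h : ((r : ℚ) + 2) * ∑ i ∈ range (k + 2), (i : ℚ) ^ (r + 1) =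
      (Polynomial.bernoulli (r + 2)).eval ((k : ℚ) + 2) - _root_.bernoulli (r + 2) := by
    simpa [add_assoc, one_add_one_eq_two] using sum_range_pow_eq_bernoulli_sub (k + 2) (r + 1)
  simp only [powerSumPoly, eval_mul, eval_C, eval_sub, eval_comp, eval_add, eval_X, eval_ofNat]
  rw [← h]
  field_simp

lemma powerSumPoly_eval_zero (r : ℕ) : (powerSumPoly r).eval 0 = 1 := by
  simpa [sum_range_succ] using powerSumPoly_eval r 0

lemma derivative_powerSumPoly_eval_zero (r : ℕ) :
    (derivative (powerSumPoly r)).eval 0 = r + 1 + bernoulli' (r + 1) :=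
  calc (derivative (powerSumPoly r)).eval 0 = (Polynomial.bernoulli (r + 1)).eval (1 + 1) := by
        simp [powerSumPoly, derivative_comp, derivative_bernoulli_add_one, one_add_one_eq_two]
        field_simp
        ring
    _ = r + 1 + bernoulli' (r + 1) := by
        rw [bernoulli_eval_one_add, bernoulli_eval_one]
        simp
        ring

noncomputable def hNatPoly : ℕ → ℚ[X]
  | 0 => 1
  | n + 1 => C ((n : ℚ) + 1)⁻¹ * ∑ r ∈ range (n + 1), powerSumPoly r * hNatPoly (n - r)

lemma hNatPoly_eval (n k : ℕ) : (hNatPoly n).eval (k : ℚ) = hNat n (k + 1) := by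
  induction n using Nat.strong_induction_on with
  | _ n ih =>
    cases n with
    | zero => simp [hNatPoly, hNat_zero_left]
    | succ n =>
      simp only [hNatPoly, eval_mul, eval_C, eval_finsetSum, powerSumPoly_eval,
        ih _ (Nat.lt_succ_of_le (Nat.sub_le n _))]
      rw [← hNat_newton n (k + 1)]
      field_simp

lemma hNatPoly_eval_zero (n : ℕ) : (hNatPoly n).eval 0 = 1 := by
  simpa [hNat_one_right] using hNatPoly_eval n 0

lemma derivative_hNatPoly_eval_zero (n : ℕ) :
    (derivative (hNatPoly n)).eval 0 = ∑ j ∈ Icc 1 n, (1 + bernoulli' j / j) := by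
  induction n using Nat.strong_induction_on with
  | _ n ih =>
    cases n with
    | zero => simp [hNatPoly]
    | succ n =>
      simp only [hNatPoly, derivative_mul, derivative_C, zero_mul, zero_add, derivative_sum,
        eval_mul, eval_C, eval_finsetSum, eval_add, powerSumPoly_eval_zero, hNatPoly_eval_zero,
        derivative_powerSumPoly_eval_zero, ih _ (Nat.lt_succ_of_le (Nat.sub_le n _)), one_mul,
        mul_one]
      have hreflect := sum_range_reflect (fun r => ∑ j ∈ Icc 1 r, (1 + bernoulli' j / j)) (n + 1)
      simp only [Nat.add_sub_cancel] at hreflect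
      rw [sum_add_distrib, hreflect, ← sum_add_distrib, inv_mul_eq_iff_eq_mul₀ (by positivity),
        ← sum_range_mul_add_sum_Icc]
      refine sum_congr rfl fun r _ => ?_
      push_cast
      field_simp

end Polynomial

theorem stmt_12_general (n : ℕ) (E : Polynomial ℚ)
    (hval : ∀ k : ℕ, E.eval (k : ℚ) = hNat n (k + 1)) :
    E.coeff 1 = (n : ℚ) + ∑ j ∈ Finset.Icc 1 n, bernoulli' j / j := by
  have hE : E = hNatPoly n := by
    refine Polynomial.eq_of_infinite_eval_eq _ _
      ((Set.infinite_range_of_injective Nat.cast_injective).mono ?_)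
    rintro _ ⟨k, rfl⟩
    simp [hval, hNatPoly_eval]
  rw [hE, Polynomial.coeff_one_eq_derivative_eval_zero, derivative_hNatPoly_eval_zero,
    sum_add_distrib]
  simp

theorem stmt_12 (n : ℕ) (hn : 0 < n) (E : Polynomial ℚ)
    (hval : ∀ k : ℕ, E.eval (k : ℚ) = hNat n (k + 1)) :
    E.coeff 1 = (n : ℚ) + ∑ j ∈ Finset.Icc 1 n, bernoulli' j / j :=
  stmt_12_general n E hval
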